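/- arXiv:2011.13732 — 2 statements merged into one kernel-verified Lean document; each statement's English description precedes it below -/
import Mathlib

section
/- Let F ∈ ℝ[x_1,…,x_n] be a homogeneous polynomial of degree s, let A_F = ℝ[∂_1,…,∂_n]/Ann(F), and fix an integer k with 0 ≤ k ≤ s/2. Let Λ_k = {e_1,…,e_m} be homogeneous degree-k elements of ℝ[∂_1,…,∂_n] whose images form a basis of the degree-k component (A_F)_k, and let H^k_F = (e_i e_j F)_{1≤i,j≤m} be the k-th Hessian matrix of F with respect to Λ_k (a matrix of polynomials in x_1,…,x_n). Then for a = (a_1,…,a_n) ∈ ℝ^n and ℓ_a = a_1∂_1 + ⋯ + a_n∂_n, the multiplication map ×ℓ_a^{s−2k} : (A_F)_k → (A_F)_{s−k} is bijective if and only if det H^k_F(a) ≠ 0. -/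
open MvPolynomial

noncomputable section

lemma pderiv_commute {n : ℕ} (i j : Fin n) (f : MvPolynomial (Fin n) ℝ) :
    pderiv i (pderiv j f) = pderiv j (pderiv i f) := by
  rcases eq_or_ne i j with rfl | hij
  · rfl
  · induction f using MvPolynomial.induction_on' with
    | monomial m a =>
        simp only [pderiv_monomial]
        have h1 : (m - Finsupp.single j 1 : Fin n →₀ ℕ) i = m i := by
          rw [Finsupp.tsub_apply, Finsupp.single_eq_of_ne' hij.symm, tsub_zero]
        have h2 : (m - Finsupp.single i 1 : Fin n →₀ ℕ) j = m j := by
          rw [Finsupp.tsub_apply, Finsupp.single_eq_of_ne' hij, tsub_zero]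
        rw [h1, h2, tsub_right_comm]
        congr 1
        ring
    | add p q hp hq => simp [hp, hq]

/-- The set of the partial derivative operators `∂ᵢ` on `ℝ[x₁, …, xₙ]`. -/
def pdSet (n : ℕ) : Set (Module.End ℝ (MvPolynomial (Fin n) ℝ)) :=
  Set.range fun i : Fin n =>
    ((pderiv i : Derivation ℝ (MvPolynomial (Fin n) ℝ) (MvPolynomial (Fin n) ℝ)) :
      MvPolynomial (Fin n) ℝ →ₗ[ℝ] MvPolynomial (Fin n) ℝ)

instance pdCommRing (n : ℕ) : CommRing (Algebra.adjoin ℝ (pdSet n)) :=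
  Algebra.adjoinCommRingOfComm ℝ (by
    rintro _ ⟨i, rfl⟩ _ ⟨j, rfl⟩
    apply LinearMap.ext
    intro f
    exact pderiv_commute i j f)

/-- The algebra map sending a polynomial `f` (in the "∂ variables") to the differential
operator `f(∂₁, …, ∂ₙ)` acting on `ℝ[x₁, …, xₙ]`; thus `dop n f F` is the result of
applying the differential operator `f(∂₁, …, ∂ₙ)` to the polynomial `F`. -/
def dop (n : ℕ) : MvPolynomial (Fin n) ℝ →ₐ[ℝ] Module.End ℝ (MvPolynomial (Fin n) ℝ) :=
  (Algebra.adjoin ℝ (pdSet n)).val.comp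
    (aeval fun i : Fin n =>
      (⟨_, Algebra.subset_adjoin (Set.mem_range_self i)⟩ : Algebra.adjoin ℝ (pdSet n)))

/-- `Ann F`, the annihilator of `F`: the ideal of all differential-operator polynomials `f`
with `f(∂₁, …, ∂ₙ) F = 0`. -/
def annIdeal {n : ℕ} (F : MvPolynomial (Fin n) ℝ) : Ideal (MvPolynomial (Fin n) ℝ) where
  carrier := {f | dop n f F = 0}
  add_mem' := by
    intro a b ha hb
    simp only [Set.mem_setOf_eq] at *
    rw [map_add, LinearMap.add_apply, ha, hb, add_zero]
  zero_mem' := by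
    simp only [Set.mem_setOf_eq, map_zero, LinearMap.zero_apply]
  smul_mem' := by
    intro c f hf
    simp only [Set.mem_setOf_eq] at *
    rw [smul_eq_mul, map_mul, Module.End.mul_apply, hf, map_zero]

/-- The Artinian Gorenstein algebra `A_F = ℝ[∂₁, …, ∂ₙ]/Ann(F)`. -/
abbrev AF {n : ℕ} (F : MvPolynomial (Fin n) ℝ) := MvPolynomial (Fin n) ℝ ⧸ annIdeal F

/-- The degree-`k` homogeneous component `(A_F)_k` of `A_F`, as a submodule of `A_F`:
the image of the space of homogeneous polynomials of degree `k` under the quotient map. -/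
def gradeA {n : ℕ} (F : MvPolynomial (Fin n) ℝ) (k : ℕ) : Submodule ℝ (AF F) :=
  Submodule.map (Ideal.Quotient.mkₐ ℝ (annIdeal F)).toLinearMap
    (homogeneousSubmodule (Fin n) ℝ k)

/-- `ℓ ∈ A_F` is a strong Lefschetz element of `A_F` (with socle degree `s`) if the
multiplication map `×ℓ^(s-2k) : (A_F)_k → (A_F)_(s-k)` is bijective for every `k` with
`0 ≤ k ≤ s/2`. -/
def IsSLelem {n : ℕ} (F : MvPolynomial (Fin n) ℝ) (s : ℕ) (ℓ : AF F) : Prop :=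
  ∀ k : ℕ, 2 * k ≤ s →
    Set.BijOn (fun f => ℓ ^ (s - 2 * k) * f) (gradeA F k) (gradeA F (s - k))

/-- `A_F` (with socle degree `s`) has the strong Lefschetz property. -/
def HasSLP {n : ℕ} (F : MvPolynomial (Fin n) ℝ) (s : ℕ) : Prop :=
  ∃ ℓ ∈ gradeA F 1, IsSLelem F s ℓ

/-- `A_F` (with socle degree `s`) satisfies the Hodge–Riemann relation with respect to the
class `ℓ` of a linear form `L`: for every `k` with `0 ≤ k ≤ s/2`, the bilinear form
`Q^k_ℓ(f, g) = (-1)^k P^k(f, ℓ^(s-2k) g)` (where `P^k(f, g) = f g F` is the Poincaré duality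
pairing) is positive definite on the kernel of `×ℓ^(s-2k+1) : (A_F)_k → (A_F)_(s-k+1)`,
i.e. `Q^k_ℓ(f, f) > 0` for every nonzero `f ∈ (A_F)_k` in that kernel. -/
def SatisfiesHRR {n : ℕ} (F : MvPolynomial (Fin n) ℝ) (s : ℕ) (L : MvPolynomial (Fin n) ℝ) :
    Prop :=
  ∀ k : ℕ, 2 * k ≤ s →
    ∀ f ∈ homogeneousSubmodule (Fin n) ℝ k,
      dop n (L ^ (s - 2 * k + 1) * f) F = 0 →
      Ideal.Quotient.mk (annIdeal F) f ≠ 0 →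
      0 < (-1 : ℝ) ^ k * constantCoeff (dop n (L ^ (s - 2 * k) * f * f) F)

/-! Pair `A_F` with itself by `(u, v) ↦ (u v F)(0)`. Iterating Euler's identity gives
`(ℓ_a^t G)(0) = t! G(a)` for `G` homogeneous of degree `t`; since a nonzero `G` does not vanish
at some point `a`, the pairing of `(A_F)_k` with `(A_F)_(s-k)` is nondegenerate, so
`v ↦ (e_i v F)(0)` embeds `(A_F)_(s-k)` into `ℝ^m`. Composed with `×ℓ_a^(s-2k)`, this sends
`e_j` to the vector `((s-2k)! (e_i e_j F)(a))_i`, i.e. the composite has matrix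
`(s-2k)! H^k_F(a)`, which is square; hence `×ℓ_a^(s-2k)` is bijective iff
`det H^k_F(a) ≠ 0`. -/

section HomogeneousDifferentialOperators

variable {n : ℕ}

lemma dop_mul_apply (f g G : MvPolynomial (Fin n) ℝ) :
    dop n (f * g) G = dop n f (dop n g G) := by
  rw [map_mul]; rfl

lemma dop_X_apply (i : Fin n) (G : MvPolynomial (Fin n) ℝ) : dop n (X i) G = pderiv i G := by
  rw [dop, AlgHom.comp_apply, aeval_X]; rfl

lemma dop_C_apply (c : ℝ) (G : MvPolynomial (Fin n) ℝ) : dop n (C c) G = c • G := by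
  rw [← algebraMap_eq, AlgHom.commutes, Module.algebraMap_end_apply]

lemma MvPolynomial.IsHomogeneous.dop_X_pow {G : MvPolynomial (Fin n) ℝ} {d : ℕ}
    (hG : G.IsHomogeneous d) (i : Fin n) (b : ℕ) : (dop n (X i ^ b) G).IsHomogeneous (d - b) := by
  induction b generalizing G d with
  | zero => simpa using hG
  | succ b ih =>
    rw [pow_succ, dop_mul_apply, dop_X_apply, Nat.sub_add_eq, Nat.sub_right_comm]
    exact ih hG.pderiv

lemma MvPolynomial.IsHomogeneous.dop_monomial {G : MvPolynomial (Fin n) ℝ} {d : ℕ}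
    (hG : G.IsHomogeneous d) (α : Fin n →₀ ℕ) :
    (dop n (monomial α 1) G).IsHomogeneous (d - α.degree) := by
  induction α using Finsupp.induction generalizing G d with
  | zero => simpa [← C_apply, dop_C_apply] using hG
  | single_add i b α _ _ ih =>
    rw [monomial_single_add, dop_mul_apply, map_add, Finsupp.degree_single, Nat.sub_add_eq,
      Nat.sub_right_comm]
    exact (ih hG).dop_X_pow i b

lemma MvPolynomial.IsHomogeneous.dop {G f : MvPolynomial (Fin n) ℝ} {d t : ℕ}
    (hG : G.IsHomogeneous d) (hf : f.IsHomogeneous t) : (dop n f G).IsHomogeneous (d - t) := by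
  rw [f.as_sum, map_sum, LinearMap.sum_apply]
  refine IsHomogeneous.sum _ _ _ fun α hα => ?_
  have hdeg : α.degree = t := by
    rw [Finsupp.degree_eq_weight_one]; exact hf (mem_support_iff.mp hα)
  rw [← mul_one (coeff α f), ← smul_eq_mul, ← smul_monomial, map_smul, LinearMap.smul_apply,
    ← hdeg]
  exact (homogeneousSubmodule (Fin n) ℝ _).smul_mem _ (hG.dop_monomial α)

end HomogeneousDifferentialOperators

section LinearForm

open Nat

variable {n : ℕ}

/-- The linear form `ℓ_a = a₁∂₁ + ⋯ + aₙ∂ₙ`. -/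
def linearForm (a : Fin n → ℝ) : MvPolynomial (Fin n) ℝ := ∑ i, C (a i) * X i

lemma isHomogeneous_linearForm (a : Fin n → ℝ) : (linearForm a).IsHomogeneous 1 :=
  IsHomogeneous.sum _ _ _ fun i _ => by simpa using (isHomogeneous_X ℝ i).C_mul (a i)

lemma isHomogeneous_linearForm_pow (a : Fin n → ℝ) (d : ℕ) :
    (linearForm a ^ d).IsHomogeneous d := by
  simpa using (isHomogeneous_linearForm a).pow d

lemma dop_linearForm_apply (a : Fin n → ℝ) (G : MvPolynomial (Fin n) ℝ) :
    dop n (linearForm a) G = ∑ i, a i • pderiv i G := by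
  simp only [linearForm, map_sum, LinearMap.sum_apply, dop_mul_apply, dop_C_apply, dop_X_apply]

lemma eval_dop_linearForm (a : Fin n → ℝ) {G : MvPolynomial (Fin n) ℝ} {d : ℕ}
    (hG : G.IsHomogeneous d) : eval a (dop n (linearForm a) G) = d * eval a G := by
  simpa [dop_linearForm_apply, smul_eq_C_mul] using congrArg (eval a) hG.sum_X_mul_pderiv

lemma constantCoeff_dop_linearForm_pow (a : Fin n → ℝ) {G : MvPolynomial (Fin n) ℝ} {d : ℕ}
    (hG : G.IsHomogeneous d) :
    constantCoeff (dop n (linearForm a ^ d) G) = d ! * eval a G := by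
  induction d generalizing G with
  | zero =>
    rw [totalDegree_eq_zero_iff_eq_C.mp (Nat.le_zero.mp hG.totalDegree_le)]
    simp
  | succ d ih =>
    rw [pow_succ, dop_mul_apply, ih (hG.dop (isHomogeneous_linearForm a)),
      eval_dop_linearForm a hG, factorial_succ]
    push_cast
    ring

lemma exists_constantCoeff_dop_linearForm_pow_ne_zero {G : MvPolynomial (Fin n) ℝ} {d : ℕ}
    (hG : G.IsHomogeneous d) (hG0 : G ≠ 0) :
    ∃ a, constantCoeff (dop n (linearForm a ^ d) G) ≠ 0 := by
  obtain ⟨a, ha⟩ : ∃ a, eval a G ≠ 0 := by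
    by_contra! h
    exact hG0 (MvPolynomial.funext fun a => by simp [h a])
  exact ⟨a, by rw [constantCoeff_dop_linearForm_pow a hG]; exact mul_ne_zero (by positivity) ha⟩

end LinearForm

section ApolarPairing

variable {n : ℕ} (F : MvPolynomial (Fin n) ℝ)

def quotientApply : AF F →ₗ[ℝ] MvPolynomial (Fin n) ℝ :=
  ((annIdeal F).restrictScalars ℝ).liftQ ((LinearMap.applyₗ F).comp (dop n).toLinearMap)
      (fun _ hf => hf) ∘ₗ
    (Submodule.Quotient.restrictScalarsEquiv ℝ (annIdeal F)).symm.toLinearMap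

lemma quotientApply_mk (f : MvPolynomial (Fin n) ℝ) :
    quotientApply F (Ideal.Quotient.mk (annIdeal F) f) = dop n f F := rfl

def apolarPairing : AF F →ₗ[ℝ] AF F →ₗ[ℝ] ℝ :=
  (LinearMap.mul ℝ (AF F)).compr₂ ((lcoeff ℝ 0).comp (quotientApply F))

lemma apolarPairing_mk (f g : MvPolynomial (Fin n) ℝ) :
    apolarPairing F (Ideal.Quotient.mk (annIdeal F) f) (Ideal.Quotient.mk (annIdeal F) g) =
      constantCoeff (dop n (f * g) F) := by
  rw [apolarPairing, LinearMap.compr₂_apply, LinearMap.mul_apply', ← map_mul,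
    LinearMap.comp_apply, quotientApply_mk]
  rfl

variable {F}

lemma mem_gradeA {t : ℕ} {u : AF F} :
    u ∈ gradeA F t ↔ ∃ f, f.IsHomogeneous t ∧ Ideal.Quotient.mk (annIdeal F) f = u :=
  Submodule.mem_map

lemma linearForm_pow_mul_mem_gradeA (a : Fin n → ℝ) (d : ℕ) {t : ℕ} {u : AF F}
    (hu : u ∈ gradeA F t) :
    Ideal.Quotient.mk (annIdeal F) (linearForm a) ^ d * u ∈ gradeA F (d + t) := by
  obtain ⟨f, hf, rfl⟩ := mem_gradeA.mp hu
  refine mem_gradeA.mpr ⟨linearForm a ^ d * f, ?_, by rw [map_mul, map_pow]⟩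
  exact (isHomogeneous_linearForm_pow a d).mul hf

/-- The witness is `ℓ_a ^ (s - t)` for a point `a` at which the polynomial `v F` does not
vanish. -/
lemma exists_apolarPairing_ne_zero {s t : ℕ} (hF : F.IsHomogeneous s) {v : AF F}
    (hv : v ∈ gradeA F t) (hv0 : v ≠ 0) :
    ∃ u ∈ gradeA F (s - t), apolarPairing F u v ≠ 0 := by
  obtain ⟨g, hg, rfl⟩ := mem_gradeA.mp hv
  have hG0 : dop n g F ≠ 0 := fun h => hv0 (Ideal.Quotient.eq_zero_iff_mem.mpr h)
  obtain ⟨a, ha⟩ := exists_constantCoeff_dop_linearForm_pow_ne_zero (hF.dop hg) hG0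
  refine ⟨_, mem_gradeA.mpr ⟨_, isHomogeneous_linearForm_pow a (s - t), rfl⟩, ?_⟩
  rwa [apolarPairing_mk, dop_mul_apply]

lemma injective_pi_apolarPairing {s t : ℕ} (hF : F.IsHomogeneous s) (ht : t ≤ s)
    {ι : Type*} {e : ι → AF F} (hspan : Submodule.span ℝ (Set.range e) = gradeA F t) :
    Function.Injective
      (LinearMap.pi fun i => (apolarPairing F (e i)).comp (gradeA F (s - t)).subtype) := by
  rw [injective_iff_map_eq_zero]
  intro v hv
  by_contra hv0
  obtain ⟨u, hu, hne⟩ := exists_apolarPairing_ne_zero hF v.2 (by simpa using hv0)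
  rw [Nat.sub_sub_self ht, ← hspan] at hu
  have hker : Submodule.span ℝ (Set.range e) ≤ LinearMap.ker ((apolarPairing F).flip v) :=
    Submodule.span_le.mpr (Set.range_subset_iff.mpr fun i => congrFun hv i)
  exact hne (hker hu)

end ApolarPairing

/-- The matrix is that of `ψ ∘ φ` in the basis `b`; injectivity of `ψ` lets it detect
surjectivity of `φ` as well. -/
lemma LinearMap.bijective_iff_det_ne_zero_of_injective {K V W ι : Type*} [Field K]
    [AddCommGroup V] [Module K V] [AddCommGroup W] [Module K W] [Fintype ι] [DecidableEq ι]
    (b : Module.Basis ι K V) (φ : V →ₗ[K] W) {ψ : W →ₗ[K] ι → K}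
    (hψ : Function.Injective ψ) :
    Function.Bijective φ ↔ (Matrix.of fun i j => ψ (φ (b j)) i).det ≠ 0 := by
  set M := Matrix.of fun i j => ψ (φ (b j)) i
  have hM : M.mulVec = ψ ∘ φ ∘ b.equivFun.symm := by
    ext c i
    simp [M, Matrix.mulVec, dotProduct, mul_comm]
  rw [← isUnit_iff_ne_zero, ← Matrix.isUnit_iff_isUnit_det]
  constructor
  · intro hφ
    rw [← Matrix.mulVec_injective_iff_isUnit, hM]
    exact hψ.comp (hφ.1.comp b.equivFun.symm.injective)
  · intro hunit
    have hinj := Matrix.mulVec_injective_iff_isUnit.mpr hunit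
    have hsurj := Matrix.mulVec_surjective_iff_isUnit.mpr hunit
    rw [hM] at hinj hsurj
    refine ⟨(Function.Injective.of_comp_iff' φ b.equivFun.symm.bijective).mp hinj.of_comp,
      fun w => ?_⟩
    obtain ⟨c, hc⟩ := hsurj (ψ w)
    exact ⟨b.equivFun.symm c, hψ hc⟩

theorem multiplication_bijective_iff_hessian_ne_zero_general
    {n s k m : ℕ} (F : MvPolynomial (Fin n) ℝ)
    (hF : F ∈ homogeneousSubmodule (Fin n) ℝ s) (hk : 2 * k ≤ s)
    (e : Fin m → MvPolynomial (Fin n) ℝ)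
    (he : ∀ i, e i ∈ homogeneousSubmodule (Fin n) ℝ k)
    (hind : LinearIndependent ℝ fun i => Ideal.Quotient.mk (annIdeal F) (e i))
    (hspan : Submodule.span ℝ
        (Set.range fun i => Ideal.Quotient.mk (annIdeal F) (e i)) = gradeA F k)
    (a : Fin n → ℝ) :
    Set.BijOn
        (fun f => Ideal.Quotient.mk (annIdeal F) (∑ i, C (a i) * X i) ^ (s - 2 * k) * f)
        (gradeA F k) (gradeA F (s - k)) ↔
      (Matrix.of fun i j : Fin m => eval a (dop n (e i * e j) F)).det ≠ 0 := by
  set mk := Ideal.Quotient.mk (annIdeal F)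
  set d := s - 2 * k
  have hmaps : Set.MapsTo (fun u => mk (linearForm a) ^ d * u) (gradeA F k) (gradeA F (s - k)) :=
    fun u hu => by simpa [show d + k = s - k by omega] using linearForm_pow_mul_mem_gradeA a d hu
  let T := (LinearMap.mulLeft ℝ (mk (linearForm a) ^ d)).restrict hmaps
  have hbij : Set.BijOn (fun u => mk (linearForm a) ^ d * u) (gradeA F k) (gradeA F (s - k)) ↔
      Function.Bijective T :=
    ⟨Set.BijOn.bijective, fun h => ⟨hmaps, hmaps.restrict_inj.mp h.1,
      hmaps.restrict_surjective_iff.mp h.2⟩⟩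
  let b := (Module.Basis.span hind).map (LinearEquiv.ofEq _ _ hspan)
  let ψ := LinearMap.pi fun i => (apolarPairing F (mk (e i))).comp (gradeA F (s - k)).subtype
  have hψ : Function.Injective ψ := injective_pi_apolarPairing hF (by omega) hspan
  have hentry : (Matrix.of fun i j => ψ (T (b j)) i) =
      (d.factorial : ℝ) • Matrix.of fun i j => eval a (dop n (e i * e j) F) := by
    ext i j
    have hHess : (dop n (e i * e j) F).IsHomogeneous d := by
      simpa [show s - (k + k) = d by omega] using hF.dop ((he i).mul (he j))
    have hb : (b j : AF F) = mk (e j) := by simp [b]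
    have hT : (T (b j) : AF F) = mk (linearForm a) ^ d * mk (e j) := by rw [← hb]; rfl
    change apolarPairing F (mk (e i)) (T (b j) : AF F) = _
    rw [hT, ← map_pow, ← map_mul, apolarPairing_mk, mul_left_comm, dop_mul_apply,
      constantCoeff_dop_linearForm_pow a hHess]
    rfl
  rw [show ∑ i, C (a i) * X i = linearForm a from rfl, hbij,
    LinearMap.bijective_iff_det_ne_zero_of_injective b T hψ, hentry, Matrix.det_smul]
  simp [Nat.factorial_ne_zero]

/-- **Watanabe, Maeno–Watanabe.** Let `F` be a nonzero homogeneous polynomial of degree `s`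
and `A_F = ℝ[∂₁,…,∂ₙ]/Ann(F)`, and fix `k` with `0 ≤ k ≤ s/2`. Let `e₁, …, eₘ` be
homogeneous polynomials of degree `k` whose classes form a basis of `(A_F)_k`, and let
`H^k_F = (eᵢ eⱼ F)` be the `k`-th Hessian matrix of `F` with respect to this basis. Then for
`a ∈ ℝⁿ` and `ℓ_a = a₁∂₁ + ⋯ + aₙ∂ₙ`, the multiplication map
`×ℓ_a^(s-2k) : (A_F)_k → (A_F)_(s-k)` is bijective iff `det H^k_F(a) ≠ 0`. -/
theorem multiplication_bijective_iff_hessian_ne_zero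
    {n s k m : ℕ} (F : MvPolynomial (Fin n) ℝ)
    (hF : F ∈ homogeneousSubmodule (Fin n) ℝ s) (hF0 : F ≠ 0) (hk : 2 * k ≤ s)
    (e : Fin m → MvPolynomial (Fin n) ℝ)
    (he : ∀ i, e i ∈ homogeneousSubmodule (Fin n) ℝ k)
    (hind : LinearIndependent ℝ fun i => Ideal.Quotient.mk (annIdeal F) (e i))
    (hspan : Submodule.span ℝ
        (Set.range fun i => Ideal.Quotient.mk (annIdeal F) (e i)) = gradeA F k)
    (a : Fin n → ℝ) :
    Set.BijOn
        (fun f => Ideal.Quotient.mk (annIdeal F) (∑ i, C (a i) * X i) ^ (s - 2 * k) * f)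
        (gradeA F k) (gradeA F (s - k)) ↔
      (Matrix.of fun i j : Fin m => eval a (dop n (e i * e j) F)).det ≠ 0 :=
  multiplication_bijective_iff_hessian_ne_zero_general F hF hk e he hind hspan a

end
end

section
/- Let F_hex = x1x2x3x4 + x2x3x6x7 + x3x4x7x8 + x1x4x5x8 + x1x2x5x6 + x5x6x7x8 ∈ ℝ[x_1,…,x_8]. The 8×8 Hessian matrix H = ((∂²F_hex/∂x_i∂x_j)(1,1,…,1))_{1≤i,j≤8} has eigenvalues 9, 1, and −3, with eigenspaces of dimensions 1, 3, and 4 respectively; equivalently, its characteristic polynomial is (x−9)(x−1)^3(x+3)^4. -/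
/-!
At the all-ones point, `∂ᵢ∂ⱼ` of a square-free monomial `∏_{k ∈ f} x_k` is `1` when `i ≠ j` both
lie in `f` and `0` otherwise, so the Hessian of `F_hex` counts the faces shared by two vertices:
`2` for an edge, `1` for a face diagonal, `0` for antipodal vertices. Labelling the vertices by
`𝔽₂³`, this matrix is translation invariant, so the characters `v ↦ (-1)^{u·v}` are eigenvectors,
with eigenvalue `9` for `u = 0`, `1` for the three `u` of weight one and `-3` for the other four.
The characters are orthogonal, hence a basis, so they diagonalise the Hessian.
-/

open MvPolynomial

noncomputable section

/-- The facet polynomial of the regular hexahedron (cube)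
(vertices `0,…,7` standing for `1,…,8`). -/
def Fhex : MvPolynomial (Fin 8) ℝ :=
  X 0 * X 1 * X 2 * X 3 + X 1 * X 2 * X 5 * X 6 + X 2 * X 3 * X 6 * X 7 +
    X 0 * X 3 * X 4 * X 7 + X 0 * X 1 * X 4 * X 5 + X 4 * X 5 * X 6 * X 7

namespace MvPolynomial

variable {R σ : Type*} [CommSemiring R] [DecidableEq σ]

theorem pderiv_prod_X (i : σ) (s : Finset σ) :
    pderiv i (∏ k ∈ s, X k : MvPolynomial σ R) = if i ∈ s then ∏ k ∈ s.erase i, X k else 0 := by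
  induction s using Finset.induction_on with
  | empty => simp
  | insert a t ha ih =>
    rw [Finset.prod_insert ha, pderiv_mul, ih]
    rcases eq_or_ne i a with rfl | hia
    · simp [ha]
    · simp [pderiv_X_of_ne hia.symm, hia, Finset.erase_insert_of_ne hia.symm,
        Finset.prod_insert (fun h => ha (Finset.mem_of_mem_erase h))]

theorem eval_one_pderiv_pderiv_prod_X (i j : σ) (s : Finset σ) :
    eval (fun _ => (1 : R)) (pderiv i (pderiv j (∏ k ∈ s, X k))) =
      if i ≠ j ∧ i ∈ s ∧ j ∈ s then 1 else 0 := by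
  by_cases hj : j ∈ s
  · simp [pderiv_prod_X, hj, Finset.mem_erase, and_comm, apply_ite (eval _)]
  · simp [pderiv_prod_X, hj]

theorem eval_one_pderiv_pderiv_sum_prod_X (i j : σ) (𝓕 : Finset (Finset σ)) :
    eval (fun _ => (1 : R)) (pderiv i (pderiv j (∑ f ∈ 𝓕, ∏ k ∈ f, X k))) =
      (𝓕.filter fun f => i ≠ j ∧ i ∈ f ∧ j ∈ f).card := by
  simp only [map_sum, eval_one_pderiv_pderiv_prod_X, Finset.sum_boole]

end MvPolynomial

namespace Matrix

variable {n R : Type*} [Fintype n] [DecidableEq n] [CommRing R] [IsDomain R]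

theorem charpoly_eq_prod_of_mul_eq_mul_diagonal {M P : Matrix n n R} {d : n → R}
    (hP : P.det ≠ 0) (h : M * P = P * diagonal d) :
    M.charpoly = ∏ i, (Polynomial.X - Polynomial.C (d i)) := by
  have hchar : charmatrix M * P.map Polynomial.C =
      P.map Polynomial.C * charmatrix (diagonal d) := by
    simp only [charmatrix, sub_mul, mul_sub, RingHom.mapMatrix_apply, ← Matrix.map_mul, h,
      (scalar_commute Polynomial.X (fun _ => Commute.all _ _) (P.map Polynomial.C)).eq]
  have hdet := congrArg det hchar
  have hPC : (P.map Polynomial.C).det = Polynomial.C P.det := (RingHom.map_det _ _).symm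
  rw [det_mul, det_mul, hPC, mul_comm] at hdet
  rw [← charpoly_diagonal, charpoly, charpoly]
  exact mul_left_cancel₀ (Polynomial.C_ne_zero.mpr hP) hdet

end Matrix

def cubeFaces : Finset (Finset (Fin 8)) :=
  {{0, 1, 2, 3}, {1, 2, 5, 6}, {2, 3, 6, 7}, {0, 3, 4, 7}, {0, 1, 4, 5}, {4, 5, 6, 7}}

theorem Fhex_eq_sum_prod_X : Fhex = ∑ f ∈ cubeFaces, ∏ k ∈ f, X k := by
  simp +decide [Fhex, cubeFaces]
  ring

def cubeHessian : Matrix (Fin 8) (Fin 8) ℤ :=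
  Matrix.of fun i j => (cubeFaces.filter fun f => i ≠ j ∧ i ∈ f ∧ j ∈ f).card

-- Column `u` is the character `v ↦ (-1)^{u·v}` of `𝔽₂³` for the vertex labelling
-- `0, …, 7 ↦ 000, 100, 110, 010, 001, 101, 111, 011` (coordinates `xyz`, as `cubeFaces` shows),
-- with the columns ordered `000, 100, 010, 001, 110, 101, 011, 111`.
def cubeCharacters : Matrix (Fin 8) (Fin 8) ℤ :=
  !![1, 1, 1, 1, 1, 1, 1, 1;
     1, -1, 1, 1, -1, -1, 1, -1;
     1, -1, -1, 1, 1, -1, -1, 1;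
     1, 1, -1, 1, -1, 1, -1, -1;
     1, 1, 1, -1, 1, -1, -1, -1;
     1, -1, 1, -1, -1, 1, -1, 1;
     1, -1, -1, -1, 1, 1, 1, -1;
     1, 1, -1, -1, -1, -1, 1, 1]

theorem cubeCharacters_mul_transpose :
    cubeCharacters * cubeCharacters.transpose = (8 : ℤ) • 1 := by
  decide

theorem cubeHessian_mul_cubeCharacters :
    cubeHessian * cubeCharacters =
      cubeCharacters * Matrix.diagonal ![9, 1, 1, 1, -3, -3, -3, -3] := by
  decide

theorem det_cubeCharacters_ne_zero : cubeCharacters.det ≠ 0 := by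
  have h := congrArg Matrix.det cubeCharacters_mul_transpose
  rw [Matrix.det_mul, Matrix.det_transpose, Matrix.det_smul, Matrix.det_one] at h
  exact left_ne_zero_of_mul (by rw [h]; norm_num)

theorem cubeHessian_charpoly :
    cubeHessian.charpoly =
      (Polynomial.X - Polynomial.C 9) * (Polynomial.X - Polynomial.C 1) ^ 3 *
        (Polynomial.X + Polynomial.C 3) ^ 4 := by
  rw [Matrix.charpoly_eq_prod_of_mul_eq_mul_diagonal det_cubeCharacters_ne_zero
    cubeHessian_mul_cubeCharacters, Fin.prod_univ_eight]
  simp only [Matrix.cons_val_zero, Matrix.cons_val_one, Matrix.cons_val, map_neg, sub_neg_eq_add]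
  ring

/-- The Hessian matrix of the facet polynomial of the cube, evaluated at the all-ones point,
has eigenvalues `9`, `1`, `-3` with eigenspaces of dimensions `1`, `3`, `4`: equivalently,
its characteristic polynomial is `(x-9)(x-1)³(x+3)⁴`. -/
theorem hexahedron_hessian_eigenvalues :
    (Matrix.of fun i j : Fin 8 =>
        eval (fun _ => (1 : ℝ)) (pderiv i (pderiv j Fhex))).charpoly =
      (Polynomial.X - Polynomial.C 9) * (Polynomial.X - Polynomial.C 1) ^ 3 *
        (Polynomial.X + Polynomial.C 3) ^ 4 := by
  have hHessian : (Matrix.of fun i j : Fin 8 =>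
      eval (fun _ => (1 : ℝ)) (pderiv i (pderiv j Fhex))) =
        cubeHessian.map (Int.castRingHom ℝ) := by
    ext i j
    rw [Matrix.map_apply, Matrix.of_apply, Fhex_eq_sum_prod_X, eval_one_pderiv_pderiv_sum_prod_X]
    simp [cubeHessian]
  rw [hHessian, Matrix.charpoly_map, cubeHessian_charpoly]
  simp only [Polynomial.map_mul, Polynomial.map_pow, Polynomial.map_sub, Polynomial.map_add,
    Polynomial.map_X, Polynomial.map_C, Int.coe_castRingHom, Int.cast_ofNat, Int.cast_one]

end
end
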